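/- Let ρ, ρ', σ be positive semidefinite operators on A with ‖ρ − σ‖₁ ≤ ε, tr[ρ'] ≤ tr[σ], and ρ' ≥ ρ. Then ‖ρ' − σ‖₁ ≤ 2ε. -/

import Mathlib

open Matrix Kronecker
open scoped ComplexOrder

/-- The square root of a positive semidefinite matrix, as defined in the older Mathlib
(`Matrix.PosSemidef.sqrt`, removed since). -/
noncomputable def Matrix.PosSemidef.sqrt {n 𝕜 : Type*} [Fintype n] [RCLike 𝕜] [DecidableEq n]
    {A : Matrix n n 𝕜} (hA : Matrix.PosSemidef A) : Matrix n n 𝕜 :=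
  hA.1.eigenvectorUnitary.1 * diagonal ((↑) ∘ (√·) ∘ hA.1.eigenvalues) *
    (star hA.1.eigenvectorUnitary : Matrix n n 𝕜)

noncomputable def traceNorm {n m : Type*} [Fintype n] [Fintype m] [DecidableEq m]
    (M : Matrix n m ℂ) : ℝ :=
  ((Matrix.posSemidef_conjTranspose_mul_self M).sqrt.trace).re

noncomputable def ptraceFst {a b : Type*} [Fintype a]
    (M : Matrix (a × b) (a × b) ℂ) : Matrix b b ℂ :=
  Matrix.of fun i j => ∑ k, M (k, i) (k, j)

noncomputable def ptraceSnd {a b : Type*} [Fintype b]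
    (M : Matrix (a × b) (a × b) ℂ) : Matrix a a ℂ :=
  Matrix.of fun i j => ∑ k, M (i, k) (j, k)


/-! Writing `ρ' - σ = (ρ' - ρ) + (ρ - σ)`, the triangle inequality for the trace norm reduces the
claim to `‖ρ' - ρ‖₁ ≤ ε`. As `ρ' - ρ ≥ 0`, its trace norm is its trace, and
`tr (ρ' - ρ) ≤ tr (σ - ρ) ≤ ‖ρ - σ‖₁`. The triangle inequality for Hermitian matrices comes from
the duality `Re tr (S X) ≤ ‖X‖₁` for `-1 ≤ S ≤ 1`, with equality when `S` is the sign of `X`. -/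

section TraceNorm

open scoped MatrixOrder

variable {n : Type*} [Fintype n] [DecidableEq n]

theorem Matrix.PosSemidef.sqrt_eq_cfcSqrt {𝕜 : Type*} [RCLike 𝕜] {A : Matrix n n 𝕜}
    (hA : A.PosSemidef) : hA.sqrt = CFC.sqrt A := by
  rw [CFC.sqrt_eq_real_sqrt A hA.nonneg, cfcₙ_eq_cfc, hA.1.cfc_eq]
  rfl

theorem Matrix.PosSemidef.trace_mul_nonneg {𝕜 : Type*} [RCLike 𝕜] {A B : Matrix n n 𝕜}
    (hA : A.PosSemidef) (hB : B.PosSemidef) : 0 ≤ (A * B).trace := by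
  obtain ⟨C, rfl⟩ := CStarAlgebra.nonneg_iff_eq_star_mul_self.mp hB.nonneg
  rw [← Matrix.mul_assoc, Matrix.trace_mul_comm, ← Matrix.mul_assoc, Matrix.star_eq_conjTranspose]
  exact (hA.mul_mul_conjTranspose_same C).trace_nonneg

theorem traceNorm_eq_re_trace_abs (X : Matrix n n ℂ) :
    traceNorm X = (CFC.abs X).trace.re := by
  rw [traceNorm, Matrix.PosSemidef.sqrt_eq_cfcSqrt]
  rfl

theorem traceNorm_of_posSemidef {A : Matrix n n ℂ} (hA : A.PosSemidef) :
    traceNorm A = A.trace.re := by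
  rw [traceNorm_eq_re_trace_abs, CFC.abs_of_nonneg A hA.nonneg]

theorem re_trace_mul_le_traceNorm {S X : Matrix n n ℂ} (hX : X.IsHermitian) (hS₁ : -1 ≤ S)
    (hS₂ : S ≤ 1) : (S * X).trace.re ≤ traceNorm X := by
  have hX' : IsSelfAdjoint X := hX
  have hpos := Matrix.PosSemidef.trace_mul_nonneg hS₂ (CFC.posPart_nonneg X).posSemidef
  have hneg := Matrix.PosSemidef.trace_mul_nonneg hS₁ (CFC.negPart_nonneg X).posSemidef
  rw [Complex.nonneg_iff] at hpos hneg
  have hsplit : (S * X).trace.re = (S * X⁺).trace.re - (S * X⁻).trace.re := by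
    rw [← Complex.sub_re, ← Matrix.trace_sub, ← Matrix.mul_sub, CFC.posPart_sub_negPart X]
  rw [traceNorm_eq_re_trace_abs, ← CFC.posPart_add_negPart X, Matrix.trace_add, Complex.add_re,
    hsplit]
  simp only [sub_mul, sub_neg_eq_add, add_mul, one_mul, Matrix.trace_sub, Matrix.trace_add,
    Complex.sub_re, Complex.add_re] at hpos hneg
  linarith [hpos.1, hneg.1]

theorem abs_re_trace_le_traceNorm {X : Matrix n n ℂ} (hX : X.IsHermitian) :
    |X.trace.re| ≤ traceNorm X := by
  have hneg := re_trace_mul_le_traceNorm hX le_rfl (neg_le_self zero_le_one)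
  have hpos := re_trace_mul_le_traceNorm hX (neg_le_self zero_le_one) le_rfl
  simp only [neg_mul, one_mul, Matrix.trace_neg, Complex.neg_re] at hneg hpos
  exact abs_le.mpr ⟨by linarith, hpos⟩

theorem exists_mul_eq_abs {H : Matrix n n ℂ} (hH : H.IsHermitian) :
    ∃ S : Matrix n n ℂ, -1 ≤ S ∧ S ≤ 1 ∧ S * H = CFC.abs H := by
  have hH' : IsSelfAdjoint H := hH
  have hcont (f : ℝ → ℝ) : ContinuousOn f (spectrum ℝ H) :=
    H.finite_real_spectrum.continuousOn f
  refine ⟨cfc (fun x : ℝ => (SignType.sign x : ℝ)) H, ?_, ?_, ?_⟩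
  · simpa using algebraMap_le_cfc _ (-1 : ℝ) H
      (fun x _ => by rcases SignType.sign x with _ | _ | _ <;> norm_num) (hcont _)
  · exact cfc_le_one _ H (fun x _ => by rcases SignType.sign x with _ | _ | _ <;> norm_num)
  · nth_rw 2 [← cfc_id' ℝ H]
    rw [← cfc_mul _ _ H (hcont _) (hcont _), CFC.abs_eq_cfc_norm H]
    exact cfc_congr fun x _ => by simp [sign_mul_self]

theorem traceNorm_add_le {X Y : Matrix n n ℂ} (hX : X.IsHermitian) (hY : Y.IsHermitian) :
    traceNorm (X + Y) ≤ traceNorm X + traceNorm Y := by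
  obtain ⟨S, hS₁, hS₂, hS⟩ := exists_mul_eq_abs (hX.add hY)
  calc traceNorm (X + Y) = (S * X).trace.re + (S * Y).trace.re := by
        rw [traceNorm_eq_re_trace_abs, ← hS, Matrix.mul_add, Matrix.trace_add, Complex.add_re]
    _ ≤ traceNorm X + traceNorm Y :=
        add_le_add (re_trace_mul_le_traceNorm hX hS₁ hS₂) (re_trace_mul_le_traceNorm hY hS₁ hS₂)

end TraceNorm

theorem traceNorm_sub_le_two_mul_general
    {n : Type*} [Fintype n] [DecidableEq n]
    (ρ ρ' σ : Matrix n n ℂ) (ε : ℝ)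
    (hρ : ρ.PosSemidef) (hσ : σ.PosSemidef)
    (h1 : traceNorm (ρ - σ) ≤ ε)
    (h2 : (ρ'.trace).re ≤ (σ.trace).re)
    (h3 : (ρ' - ρ).PosSemidef) :
    traceNorm (ρ' - σ) ≤ 2 * ε := by
  have hD : (ρ - σ).IsHermitian := hρ.1.sub hσ.1
  have hincr : traceNorm (ρ' - ρ) ≤ traceNorm (ρ - σ) := by
    have := neg_le_of_abs_le (abs_re_trace_le_traceNorm hD)
    rw [traceNorm_of_posSemidef h3]
    simp only [Matrix.trace_sub, Complex.sub_re] at this ⊢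
    linarith
  calc traceNorm (ρ' - σ) = traceNorm ((ρ' - ρ) + (ρ - σ)) := by rw [sub_add_sub_cancel]
    _ ≤ traceNorm (ρ' - ρ) + traceNorm (ρ - σ) := traceNorm_add_le h3.1 hD
    _ ≤ 2 * ε := by linarith

/-- If `‖ρ − σ‖₁ ≤ ε`, `tr[ρ'] ≤ tr[σ]` and `ρ' ≥ ρ`, then `‖ρ' − σ‖₁ ≤ 2ε`. -/
theorem traceNorm_sub_le_two_mul
    {n : Type*} [Fintype n] [DecidableEq n]
    (ρ ρ' σ : Matrix n n ℂ) (ε : ℝ) (hε : 0 < ε)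
    (hρ : ρ.PosSemidef) (hρ' : ρ'.PosSemidef) (hσ : σ.PosSemidef)
    (h1 : traceNorm (ρ - σ) ≤ ε)
    (h2 : (ρ'.trace).re ≤ (σ.trace).re)
    (h3 : (ρ' - ρ).PosSemidef) :
    traceNorm (ρ' - σ) ≤ 2 * ε :=
  traceNorm_sub_le_two_mul_general ρ ρ' σ ε hρ hσ h1 h2 h3
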